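/- For every positive integer n, the flip graph of slab tilings of the 6n×6n×8n box has at least 2n²+1 connected components. -/

import Mathlib

/-- A slab: an axis-aligned 2×2×1 block of four cells of ℤ³. -/
def IsSlab (S : Set (ℤ × ℤ × ℤ)) : Prop :=
  (∃ x y z : ℤ, S = {(x, y, z), (x + 1, y, z), (x, y + 1, z), (x + 1, y + 1, z)}) ∨
  (∃ x y z : ℤ, S = {(x, y, z), (x + 1, y, z), (x, y, z + 1), (x + 1, y, z + 1)}) ∨
  (∃ x y z : ℤ, S = {(x, y, z), (x, y + 1, z), (x, y, z + 1), (x, y + 1, z + 1)})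

/-- A slab tiling of a region `R ⊆ ℤ³`: a partition of `R` into slabs. -/
def IsSlabTiling (R : Set (ℤ × ℤ × ℤ)) (t : Set (Set (ℤ × ℤ × ℤ))) : Prop :=
  (∀ S ∈ t, IsSlab S) ∧
  (∀ S ∈ t, ∀ S' ∈ t, S ≠ S' → Disjoint S S') ∧
  ⋃₀ t = R

/-- A 2×2×2 block of eight cells of ℤ³. -/
def IsBlock222 (B : Set (ℤ × ℤ × ℤ)) : Prop :=
  ∃ x y z : ℤ, B = {(x, y, z), (x + 1, y, z), (x, y + 1, z), (x + 1, y + 1, z),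
    (x, y, z + 1), (x + 1, y, z + 1), (x, y + 1, z + 1), (x + 1, y + 1, z + 1)}

/-- Two tilings differ by a flip. -/
def Flip (t t' : Set (Set (ℤ × ℤ × ℤ))) : Prop :=
  ∃ P₁ P₂ P₁' P₂' : Set (ℤ × ℤ × ℤ),
    P₁ ∈ t ∧ P₂ ∈ t ∧ P₁' ∈ t' ∧ P₂' ∈ t' ∧
    t \ {P₁, P₂} = t' \ {P₁', P₂'} ∧
    P₁ ∪ P₂ = P₁' ∪ P₂' ∧ IsBlock222 (P₁ ∪ P₂)

/-- The L×M×N box of cells {0,…,L−1}×{0,…,M−1}×{0,…,N−1}. -/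
def Box (L M N : ℤ) : Set (ℤ × ℤ × ℤ) :=
  {p | 0 ≤ p.1 ∧ p.1 < L ∧ 0 ≤ p.2.1 ∧ p.2.1 < M ∧ 0 ≤ p.2.2 ∧ p.2.2 < N}

/-!
A tiling in which no two slabs fill a 2×2×2 block admits no flip, so it is alone in its
component of the flip graph. Cut the box into `n × n × 2n` bricks of size 6×6×4 and colour them
like a chessboard. For each colour there are two such rigid tilings of a brick, and the tilings
of the two colours are chosen so that slabs facing each other across the common face of adjacent
bricks never fill a 2×2×2 block; slabs in bricks without a common face are too far apart to do so.
These finitely many facts about four explicit brick tilings are checked by evaluation. Any choice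
of versions brick by brick is then a rigid tiling of the box, and using the second version in
the first `i` bricks of an enumeration, `0 ≤ i ≤ 2n²`, gives `2n² + 1` distinct ones.
-/

def IsRigid (t : Set (Set (ℤ × ℤ × ℤ))) : Prop :=
  ∀ P ∈ t, ∀ Q ∈ t, ¬ IsBlock222 (P ∪ Q)

theorem IsRigid.not_flip {t : Set (Set (ℤ × ℤ × ℤ))} (ht : IsRigid t)
    (t' : Set (Set (ℤ × ℤ × ℤ))) : ¬ Flip t t' := by
  rintro ⟨P₁, P₂, -, -, h₁, h₂, -, -, -, -, hB⟩
  exact ht P₁ h₁ P₂ h₂ hB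

theorem IsRigid.eq_of_reflTransGen {t t' : Set (Set (ℤ × ℤ × ℤ))} (ht : IsRigid t)
    (h : Relation.ReflTransGen Flip t t') : t = t' := by
  rcases h.cases_head with rfl | ⟨u, hu, -⟩
  · rfl
  · exact (ht.not_flip u hu).elim

theorem le_of_mem_isBlock222 {x y z : ℤ} {p : ℤ × ℤ × ℤ}
    (h : p ∈ ({(x, y, z), (x + 1, y, z), (x, y + 1, z), (x + 1, y + 1, z), (x, y, z + 1),
      (x + 1, y, z + 1), (x, y + 1, z + 1), (x + 1, y + 1, z + 1)} : Set (ℤ × ℤ × ℤ))) :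
    x ≤ p.1 ∧ p.1 ≤ x + 1 ∧ y ≤ p.2.1 ∧ p.2.1 ≤ y + 1 ∧ z ≤ p.2.2 ∧ p.2.2 ≤ z + 1 := by
  obtain ⟨px, py, pz⟩ := p
  simp only [Set.mem_insert_iff, Set.mem_singleton_iff, Prod.mk.injEq] at h
  dsimp only
  omega

inductive Axis
  | x | y | z
deriving DecidableEq

/-- The slab with normal direction `normal` whose least cell is `(x, y, z)`. -/
structure Slab where
  normal : Axis
  x : ℤ
  y : ℤ
  z : ℤ
deriving DecidableEq

namespace Slab

def xMax : Slab → ℤ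
  | ⟨.x, x, _, _⟩ => x
  | ⟨_, x, _, _⟩ => x + 1

def yMax : Slab → ℤ
  | ⟨.y, _, y, _⟩ => y
  | ⟨_, _, y, _⟩ => y + 1

def zMax : Slab → ℤ
  | ⟨.z, _, _, z⟩ => z
  | ⟨_, _, _, z⟩ => z + 1

def cells (s : Slab) : Set (ℤ × ℤ × ℤ) :=
  {p | s.x ≤ p.1 ∧ p.1 ≤ s.xMax ∧ s.y ≤ p.2.1 ∧ p.2.1 ≤ s.yMax ∧ s.z ≤ p.2.2 ∧ p.2.2 ≤ s.zMax}

instance (s : Slab) (p : ℤ × ℤ × ℤ) : Decidable (p ∈ s.cells) :=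
  inferInstanceAs (Decidable (_ ∧ _))

def shift (s : Slab) (d : ℤ × ℤ × ℤ) : Slab :=
  ⟨s.normal, s.x + d.1, s.y + d.2.1, s.z + d.2.2⟩

/-- Two slabs are apart when their union does not fit in any 2×2×2 block. -/
def Apart (s t : Slab) : Prop :=
  s.x + 2 ≤ t.xMax ∨ t.x + 2 ≤ s.xMax ∨ s.y + 2 ≤ t.yMax ∨ t.y + 2 ≤ s.yMax ∨
    s.z + 2 ≤ t.zMax ∨ t.z + 2 ≤ s.zMax

instance : DecidableRel Apart := fun _ _ => inferInstanceAs (Decidable (_ ∨ _))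

def Separated (s t : Slab) : Prop :=
  s.xMax < t.x ∨ t.xMax < s.x ∨ s.yMax < t.y ∨ t.yMax < s.y ∨ s.zMax < t.z ∨ t.zMax < s.z

instance : DecidableRel Separated := fun _ _ => inferInstanceAs (Decidable (_ ∨ _))

def InBrick (s : Slab) : Prop :=
  0 ≤ s.x ∧ s.xMax < 6 ∧ 0 ≤ s.y ∧ s.yMax < 6 ∧ 0 ≤ s.z ∧ s.zMax < 4

instance : DecidablePred InBrick := fun _ => inferInstanceAs (Decidable (_ ∧ _))

theorem max_spec (s : Slab) :
    s.x ≤ s.xMax ∧ s.xMax ≤ s.x + 1 ∧ s.y ≤ s.yMax ∧ s.yMax ≤ s.y + 1 ∧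
      s.z ≤ s.zMax ∧ s.zMax ≤ s.z + 1 ∧ s.x + s.y + s.z + 2 = s.xMax + s.yMax + s.zMax := by
  obtain ⟨_ | _ | _, x, y, z⟩ := s <;> simp only [xMax, yMax, zMax] <;> omega

@[simp] theorem x_shift (s : Slab) (d : ℤ × ℤ × ℤ) : (s.shift d).x = s.x + d.1 := rfl

@[simp] theorem y_shift (s : Slab) (d : ℤ × ℤ × ℤ) : (s.shift d).y = s.y + d.2.1 := rfl

@[simp] theorem z_shift (s : Slab) (d : ℤ × ℤ × ℤ) : (s.shift d).z = s.z + d.2.2 := rfl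

@[simp] theorem xMax_shift (s : Slab) (d : ℤ × ℤ × ℤ) : (s.shift d).xMax = s.xMax + d.1 := by
  obtain ⟨_ | _ | _, x, y, z⟩ := s <;> simp only [shift, xMax] <;> ring

@[simp] theorem yMax_shift (s : Slab) (d : ℤ × ℤ × ℤ) : (s.shift d).yMax = s.yMax + d.2.1 := by
  obtain ⟨_ | _ | _, x, y, z⟩ := s <;> simp only [shift, yMax] <;> ring

@[simp] theorem zMax_shift (s : Slab) (d : ℤ × ℤ × ℤ) : (s.shift d).zMax = s.zMax + d.2.2 := by
  obtain ⟨_ | _ | _, x, y, z⟩ := s <;> simp only [shift, zMax] <;> ring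

theorem isSlab_cells (s : Slab) : IsSlab s.cells := by
  obtain ⟨_ | _ | _, x, y, z⟩ := s <;>
    [refine Or.inr (Or.inr ⟨x, y, z, ?_⟩); refine Or.inr (Or.inl ⟨x, y, z, ?_⟩);
      refine Or.inl ⟨x, y, z, ?_⟩] <;>
    ext ⟨a, b, c⟩ <;>
    simp only [cells, xMax, yMax, zMax, Set.mem_ofPred_eq, Set.mem_insert_iff,
      Set.mem_singleton_iff, Prod.mk.injEq] <;>
    omega

theorem corner_mem_cells (s : Slab) : (s.x, s.y, s.z) ∈ s.cells := by
  have := s.max_spec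
  simp only [cells, Set.mem_ofPred_eq]
  omega

theorem farCorner_mem_cells (s : Slab) : (s.xMax, s.yMax, s.zMax) ∈ s.cells := by
  have := s.max_spec
  simp only [cells, Set.mem_ofPred_eq]
  omega

theorem not_isBlock222_cells (s : Slab) : ¬ IsBlock222 s.cells := by
  rintro ⟨x, y, z, hB⟩
  have hlo : ((x, y, z) : ℤ × ℤ × ℤ) ∈ s.cells := by rw [hB]; simp
  have hhi : ((x + 1, y + 1, z + 1) : ℤ × ℤ × ℤ) ∈ s.cells := by rw [hB]; simp
  have := s.max_spec
  simp only [cells, Set.mem_ofPred_eq] at hlo hhi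
  omega

theorem not_isBlock222_union_of_apart {s t : Slab} (h : Apart s t) :
    ¬ IsBlock222 (s.cells ∪ t.cells) := by
  rintro ⟨x, y, z, hB⟩
  have hs₀ := le_of_mem_isBlock222 (hB ▸ Set.mem_union_left _ s.corner_mem_cells)
  have hs₁ := le_of_mem_isBlock222 (hB ▸ Set.mem_union_left _ s.farCorner_mem_cells)
  have ht₀ := le_of_mem_isBlock222 (hB ▸ Set.mem_union_right _ t.corner_mem_cells)
  have ht₁ := le_of_mem_isBlock222 (hB ▸ Set.mem_union_right _ t.farCorner_mem_cells)
  simp only [Apart] at h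
  dsimp only at hs₀ hs₁ ht₀ ht₁
  omega

theorem disjoint_cells_of_separated {s t : Slab} (h : Separated s t) :
    Disjoint s.cells t.cells := by
  simp only [Set.disjoint_left, cells, Set.mem_ofPred_eq, Separated] at h ⊢
  omega

theorem cells_injective : Function.Injective cells := by
  intro s t h
  have hs₀ := h ▸ s.corner_mem_cells
  have hs₁ := h ▸ s.farCorner_mem_cells
  have ht₀ := h.symm ▸ t.corner_mem_cells
  have ht₁ := h.symm ▸ t.farCorner_mem_cells
  simp only [cells, Set.mem_ofPred_eq] at hs₀ hs₁ ht₀ ht₁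
  obtain ⟨_ | _ | _, x, y, z⟩ := s <;> obtain ⟨_ | _ | _, x', y', z'⟩ := t <;>
    simp only [xMax, yMax, zMax, mk.injEq, reduceCtorEq, true_and, false_and] at * <;> omega

theorem mem_cells_shift {s : Slab} {d p : ℤ × ℤ × ℤ} :
    p ∈ (s.shift d).cells ↔ (p.1 - d.1, p.2.1 - d.2.1, p.2.2 - d.2.2) ∈ s.cells := by
  simp only [cells, Set.mem_ofPred_eq, x_shift, y_shift, z_shift, xMax_shift, yMax_shift,
    zMax_shift]
  omega

@[simp] theorem shift_zero (s : Slab) : s.shift 0 = s := by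
  simp [shift]

theorem shift_injective {d : ℤ × ℤ × ℤ} : Function.Injective fun s : Slab => s.shift d := by
  rintro ⟨_, _, _, _⟩ ⟨_, _, _, _⟩ h
  simp only [shift, mk.injEq, add_left_inj] at h
  simp only [h]

theorem apart_shift_iff {s t : Slab} {d e : ℤ × ℤ × ℤ} :
    Apart (s.shift d) (t.shift e) ↔ Apart s (t.shift (e - d)) := by
  simp only [Apart, x_shift, y_shift, z_shift, xMax_shift, yMax_shift, zMax_shift, Prod.fst_sub,
    Prod.snd_sub]
  omega

theorem separated_shift_iff {s t : Slab} {d : ℤ × ℤ × ℤ} :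
    Separated (s.shift d) (t.shift d) ↔ Separated s t := by
  simp only [Separated, x_shift, y_shift, z_shift, xMax_shift, yMax_shift, zMax_shift]
  omega

/-- Slabs of 6×6×4 bricks that are not apart lie in one brick or in two bricks sharing a face. -/
theorem offset_of_not_apart {s t : Slab} (hs : s.InBrick) (ht : t.InBrick) {i j k : ℤ}
    (h : ¬ Apart s (t.shift (6 * i, 6 * j, 4 * k))) :
    (i ≠ 0 → (i = 1 ∨ i = -1) ∧ j = 0 ∧ k = 0) ∧ (j ≠ 0 → (j = 1 ∨ j = -1) ∧ i = 0 ∧ k = 0) ∧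
      (k ≠ 0 → (k = 1 ∨ k = -1) ∧ i = 0 ∧ j = 0) := by
  simp only [InBrick, Apart, x_shift, y_shift, z_shift, xMax_shift, yMax_shift, zMax_shift]
    at hs ht h
  obtain ⟨_ | _ | _, x, y, z⟩ := s <;> obtain ⟨_ | _ | _, x', y', z'⟩ := t <;>
    simp only [xMax, yMax, zMax] at hs ht h <;> omega

end Slab

/-- Rigid slab tilings of the 6×6×4 brick, in two versions `b` for each colour `p` of the
chessboard colouring of the bricks. -/
def brick : Bool → Bool → List Slab
  | true, false => [
    ⟨.x, 0, 1, 1⟩, ⟨.x, 0, 3, 1⟩, ⟨.x, 1, 2, 1⟩, ⟨.x, 4, 2, 1⟩, ⟨.x, 5, 1, 1⟩, ⟨.x, 5, 3, 1⟩,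
    ⟨.y, 0, 0, 1⟩, ⟨.y, 0, 5, 1⟩, ⟨.y, 1, 1, 1⟩, ⟨.y, 1, 4, 1⟩, ⟨.y, 2, 0, 1⟩, ⟨.y, 2, 2, 0⟩,
    ⟨.y, 2, 2, 2⟩, ⟨.y, 2, 3, 1⟩, ⟨.y, 2, 5, 0⟩, ⟨.y, 2, 5, 2⟩, ⟨.y, 3, 1, 1⟩, ⟨.y, 3, 4, 1⟩,
    ⟨.y, 4, 0, 0⟩, ⟨.y, 4, 0, 2⟩, ⟨.y, 4, 5, 0⟩, ⟨.y, 4, 5, 2⟩, ⟨.z, 0, 0, 0⟩, ⟨.z, 0, 0, 3⟩,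
    ⟨.z, 0, 2, 0⟩, ⟨.z, 0, 2, 3⟩, ⟨.z, 0, 4, 0⟩, ⟨.z, 0, 4, 3⟩, ⟨.z, 2, 0, 0⟩, ⟨.z, 2, 0, 3⟩,
    ⟨.z, 2, 3, 0⟩, ⟨.z, 2, 3, 3⟩, ⟨.z, 4, 1, 0⟩, ⟨.z, 4, 1, 3⟩, ⟨.z, 4, 3, 0⟩, ⟨.z, 4, 3, 3⟩]
  | true, true => [
    ⟨.x, 0, 1, 1⟩, ⟨.x, 0, 3, 1⟩, ⟨.x, 1, 2, 1⟩, ⟨.x, 4, 2, 1⟩, ⟨.x, 5, 1, 1⟩, ⟨.x, 5, 3, 1⟩,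
    ⟨.y, 0, 0, 1⟩, ⟨.y, 0, 5, 1⟩, ⟨.y, 1, 1, 1⟩, ⟨.y, 1, 4, 1⟩, ⟨.y, 2, 0, 0⟩, ⟨.y, 2, 0, 2⟩,
    ⟨.y, 2, 2, 1⟩, ⟨.y, 2, 3, 0⟩, ⟨.y, 2, 3, 2⟩, ⟨.y, 2, 5, 1⟩, ⟨.y, 3, 1, 1⟩, ⟨.y, 3, 4, 1⟩,
    ⟨.y, 4, 0, 0⟩, ⟨.y, 4, 0, 2⟩, ⟨.y, 4, 5, 0⟩, ⟨.y, 4, 5, 2⟩, ⟨.z, 0, 0, 0⟩, ⟨.z, 0, 0, 3⟩,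
    ⟨.z, 0, 2, 0⟩, ⟨.z, 0, 2, 3⟩, ⟨.z, 0, 4, 0⟩, ⟨.z, 0, 4, 3⟩, ⟨.z, 2, 1, 0⟩, ⟨.z, 2, 1, 3⟩,
    ⟨.z, 2, 4, 0⟩, ⟨.z, 2, 4, 3⟩, ⟨.z, 4, 1, 0⟩, ⟨.z, 4, 1, 3⟩, ⟨.z, 4, 3, 0⟩, ⟨.z, 4, 3, 3⟩]
  | false, false => [
    ⟨.x, 0, 0, 0⟩, ⟨.x, 0, 0, 2⟩, ⟨.x, 0, 2, 0⟩, ⟨.x, 0, 2, 2⟩, ⟨.x, 0, 4, 0⟩, ⟨.x, 0, 4, 2⟩,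
    ⟨.x, 1, 1, 1⟩, ⟨.x, 1, 3, 1⟩, ⟨.x, 2, 2, 1⟩, ⟨.x, 3, 2, 0⟩, ⟨.x, 3, 2, 2⟩, ⟨.x, 4, 1, 1⟩,
    ⟨.x, 4, 3, 1⟩, ⟨.x, 5, 0, 0⟩, ⟨.x, 5, 0, 2⟩, ⟨.x, 5, 2, 1⟩, ⟨.x, 5, 4, 0⟩, ⟨.x, 5, 4, 2⟩,
    ⟨.y, 1, 0, 1⟩, ⟨.y, 1, 5, 1⟩, ⟨.y, 2, 1, 1⟩, ⟨.y, 2, 4, 1⟩, ⟨.y, 3, 0, 1⟩, ⟨.y, 3, 5, 1⟩,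
    ⟨.z, 1, 0, 0⟩, ⟨.z, 1, 0, 3⟩, ⟨.z, 1, 2, 0⟩, ⟨.z, 1, 2, 3⟩, ⟨.z, 1, 4, 0⟩, ⟨.z, 1, 4, 3⟩,
    ⟨.z, 3, 0, 0⟩, ⟨.z, 3, 0, 3⟩, ⟨.z, 3, 4, 0⟩, ⟨.z, 3, 4, 3⟩, ⟨.z, 4, 2, 0⟩, ⟨.z, 4, 2, 3⟩]
  | false, true => [
    ⟨.x, 0, 0, 0⟩, ⟨.x, 0, 0, 2⟩, ⟨.x, 0, 2, 0⟩, ⟨.x, 0, 2, 2⟩, ⟨.x, 0, 4, 0⟩, ⟨.x, 0, 4, 2⟩,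
    ⟨.x, 1, 1, 1⟩, ⟨.x, 1, 3, 1⟩, ⟨.x, 2, 2, 1⟩, ⟨.x, 3, 2, 0⟩, ⟨.x, 3, 2, 2⟩, ⟨.x, 4, 1, 1⟩,
    ⟨.x, 4, 3, 1⟩, ⟨.x, 5, 0, 0⟩, ⟨.x, 5, 0, 2⟩, ⟨.x, 5, 2, 1⟩, ⟨.x, 5, 4, 0⟩, ⟨.x, 5, 4, 2⟩,
    ⟨.y, 1, 0, 0⟩, ⟨.y, 1, 0, 2⟩, ⟨.y, 1, 5, 0⟩, ⟨.y, 1, 5, 2⟩, ⟨.y, 2, 1, 1⟩, ⟨.y, 2, 4, 1⟩,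
    ⟨.y, 3, 0, 1⟩, ⟨.y, 3, 5, 1⟩, ⟨.z, 1, 1, 0⟩, ⟨.z, 1, 1, 3⟩, ⟨.z, 1, 3, 0⟩, ⟨.z, 1, 3, 3⟩,
    ⟨.z, 3, 0, 0⟩, ⟨.z, 3, 0, 3⟩, ⟨.z, 3, 4, 0⟩, ⟨.z, 3, 4, 3⟩, ⟨.z, 4, 2, 0⟩, ⟨.z, 4, 2, 3⟩]

def faceOffsets : List (ℤ × ℤ × ℤ) :=
  [(6, 0, 0), (-6, 0, 0), (0, 6, 0), (0, -6, 0), (0, 0, 4), (0, 0, -4)]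

theorem brick_inBrick : ∀ p b, ∀ s ∈ brick p b, s.InBrick := by decide +kernel

theorem brick_covers : ∀ p b, ∀ x : ℕ, x < 6 → ∀ y : ℕ, y < 6 → ∀ z : ℕ, z < 4 →
    ∃ s ∈ brick p b, ((x : ℤ), (y : ℤ), (z : ℤ)) ∈ s.cells := by decide +kernel

theorem brick_separated_apart : ∀ p b, ∀ s ∈ brick p b, ∀ t ∈ brick p b, s ≠ t →
    s.Separated t ∧ s.Apart t := by decide +kernel

theorem brick_apart_across_face : ∀ p b b', ∀ s ∈ brick p b, ∀ t ∈ brick (!p) b',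
    ∀ d ∈ faceOffsets, s.Apart (t.shift d) := by decide +kernel

theorem brick_exists_not_mem : ∀ p b, ∃ s ∈ brick p b, s ∉ brick p (!b) := by decide +kernel

abbrev BrickIndex (n : ℕ) := Fin n × Fin n × Fin (2 * n)

section Bricks

variable {n : ℕ}

def origin (β : BrickIndex n) : ℤ × ℤ × ℤ :=
  (6 * (β.1 : ℕ), 6 * (β.2.1 : ℕ), 4 * (β.2.2 : ℕ))

def parity (β : BrickIndex n) : Bool :=
  decide (Even ((β.1 : ℕ) + β.2.1 + β.2.2))

def tiling (v : BrickIndex n → Bool) : Set (Set (ℤ × ℤ × ℤ)) :=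
  {P | ∃ β, ∃ s ∈ brick (parity β) (v β), P = (s.shift (origin β)).cells}

theorem bounds_of_mem_cells_shift_origin {β : BrickIndex n} {s : Slab} (hs : s.InBrick)
    {p : ℤ × ℤ × ℤ} (hp : p ∈ (s.shift (origin β)).cells) :
    6 * (β.1 : ℤ) ≤ p.1 ∧ p.1 < 6 * (β.1 : ℤ) + 6 ∧ 6 * (β.2.1 : ℤ) ≤ p.2.1 ∧
      p.2.1 < 6 * (β.2.1 : ℤ) + 6 ∧ 4 * (β.2.2 : ℤ) ≤ p.2.2 ∧ p.2.2 < 4 * (β.2.2 : ℤ) + 4 := by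
  have := s.max_spec
  simp only [Slab.cells, Slab.x_shift, Slab.y_shift, Slab.z_shift, Slab.xMax_shift,
    Slab.yMax_shift, Slab.zMax_shift, Set.mem_ofPred_eq, origin] at hp
  simp only [Slab.InBrick] at hs
  omega

theorem brickIndex_eq_of_mem_cells {β β' : BrickIndex n} {s t : Slab}
    (hs : s.InBrick) (ht : t.InBrick) {p : ℤ × ℤ × ℤ} (hp : p ∈ (s.shift (origin β)).cells)
    (hp' : p ∈ (t.shift (origin β')).cells) : β = β' := by
  have h := bounds_of_mem_cells_shift_origin hs hp
  have h' := bounds_of_mem_cells_shift_origin ht hp'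
  obtain ⟨⟨a, _⟩, ⟨b, _⟩, ⟨c, _⟩⟩ := β
  obtain ⟨⟨a', _⟩, ⟨b', _⟩, ⟨c', _⟩⟩ := β'
  simp only [Prod.mk.injEq, Fin.mk.injEq] at h h' ⊢
  omega

theorem sUnion_tiling (v : BrickIndex n → Bool) :
    ⋃₀ tiling v = Box (6 * (n : ℤ)) (6 * (n : ℤ)) (8 * (n : ℤ)) := by
  ext p
  simp only [Set.mem_sUnion, Box, Set.mem_ofPred_eq]
  constructor
  · rintro ⟨_, ⟨⟨a, b, c⟩, s, hs, rfl⟩, hp⟩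
    have := bounds_of_mem_cells_shift_origin (brick_inBrick _ _ s hs) hp
    omega
  · rintro ⟨h₁, h₂, h₃, h₄, h₅, h₆⟩
    let β : BrickIndex n :=
      (⟨(p.1 / 6).toNat, by omega⟩, ⟨(p.2.1 / 6).toNat, by omega⟩, ⟨(p.2.2 / 4).toNat, by omega⟩)
    obtain ⟨s, hs, hp⟩ := brick_covers (parity β) (v β) (p.1 % 6).toNat (by omega)
      (p.2.1 % 6).toNat (by omega) (p.2.2 % 4).toNat (by omega)
    refine ⟨_, ⟨β, s, hs, rfl⟩, Slab.mem_cells_shift.mpr ?_⟩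
    convert hp using 3 <;> simp only [origin, β] <;> omega

theorem isSlabTiling_tiling (v : BrickIndex n → Bool) :
    IsSlabTiling (Box (6 * (n : ℤ)) (6 * (n : ℤ)) (8 * (n : ℤ))) (tiling v) := by
  refine ⟨?_, ?_, sUnion_tiling v⟩
  · rintro _ ⟨β, s, -, rfl⟩
    exact s.shift (origin β) |>.isSlab_cells
  · rintro _ ⟨β, s, hs, rfl⟩ _ ⟨β', t, ht, rfl⟩ hne
    by_cases hβ : β = β'
    · subst hβ
      have hst : s ≠ t := by rintro rfl; exact hne rfl
      exact Slab.disjoint_cells_of_separated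
        (Slab.separated_shift_iff.mpr (brick_separated_apart _ _ s hs t ht hst).1)
    · exact Set.disjoint_left.mpr fun p hp hp' => hβ <| brickIndex_eq_of_mem_cells
        (brick_inBrick _ _ s hs) (brick_inBrick _ _ t ht) hp hp'

theorem apart_of_brickIndex_ne {v : BrickIndex n → Bool} {β β' : BrickIndex n} (hβ : β ≠ β')
    {s t : Slab} (hs : s ∈ brick (parity β) (v β)) (ht : t ∈ brick (parity β') (v β')) :
    (s.shift (origin β)).Apart (t.shift (origin β')) := by
  obtain ⟨⟨a, ha⟩, ⟨b, hb⟩, ⟨c, hc⟩⟩ := β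
  obtain ⟨⟨a', ha'⟩, ⟨b', hb'⟩, ⟨c', hc'⟩⟩ := β'
  have hoff : origin (⟨a', ha'⟩, ⟨b', hb'⟩, ⟨c', hc'⟩) - origin (⟨a, ha⟩, ⟨b, hb⟩, ⟨c, hc⟩) =
      (6 * ((a' : ℤ) - a), 6 * ((b' : ℤ) - b), 4 * ((c' : ℤ) - c)) := by
    simp only [origin, Prod.mk_sub_mk]
    ring_nf
  rw [Slab.apart_shift_iff, hoff]
  by_contra h
  have hface := Slab.offset_of_not_apart (brick_inBrick _ _ s hs) (brick_inBrick _ _ t ht) h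
  simp only [ne_eq, Prod.mk.injEq, Fin.mk.injEq] at hβ
  have hunit : ((a' : ℤ) - a = 1 ∨ (a' : ℤ) - a = -1) ∧ (b' : ℤ) - b = 0 ∧ (c' : ℤ) - c = 0 ∨
      ((b' : ℤ) - b = 1 ∨ (b' : ℤ) - b = -1) ∧ (a' : ℤ) - a = 0 ∧ (c' : ℤ) - c = 0 ∨
      ((c' : ℤ) - c = 1 ∨ (c' : ℤ) - c = -1) ∧ (a' : ℤ) - a = 0 ∧ (b' : ℤ) - b = 0 := by
    omega
  have hd : (6 * ((a' : ℤ) - a), 6 * ((b' : ℤ) - b), 4 * ((c' : ℤ) - c)) ∈ faceOffsets := by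
    rcases hunit with ⟨hi | hi, hj, hk⟩ | ⟨hj | hj, hi, hk⟩ | ⟨hk | hk, hi, hj⟩ <;>
      simp [hi, hj, hk, faceOffsets]
  have hp : parity (⟨a', ha'⟩, ⟨b', hb'⟩, ⟨c', hc'⟩) = !parity (⟨a, ha⟩, ⟨b, hb⟩, ⟨c, hc⟩) := by
    simp only [parity, Nat.even_iff, Bool.eq_not, ne_eq, decide_eq_decide]
    omega
  rw [hp] at ht
  exact h (brick_apart_across_face _ _ _ s hs t ht _ hd)

theorem isRigid_tiling (v : BrickIndex n → Bool) : IsRigid (tiling v) := by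
  rintro _ ⟨β, s, hs, rfl⟩ _ ⟨β', t, ht, rfl⟩
  by_cases hβ : β = β'
  · subst hβ
    by_cases hst : s = t
    · subst hst
      rw [Set.union_self]
      exact Slab.not_isBlock222_cells _
    · exact Slab.not_isBlock222_union_of_apart <| Slab.apart_shift_iff.mpr <| by
        simpa using (brick_separated_apart _ _ s hs t ht hst).2
  · exact Slab.not_isBlock222_union_of_apart (apart_of_brickIndex_ne hβ hs ht)

theorem tiling_injective : Function.Injective (tiling (n := n)) := by
  intro v v' h
  by_contra hne
  obtain ⟨β, hβ⟩ := Function.ne_iff.mp hne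
  obtain ⟨w, hw, hw'⟩ := brick_exists_not_mem (parity β) (v β)
  have hmem : (w.shift (origin β)).cells ∈ tiling v' := h ▸ ⟨β, w, hw, rfl⟩
  obtain ⟨β', s, hs, hws⟩ := hmem
  have hβ' : β = β' := brickIndex_eq_of_mem_cells (brick_inBrick _ _ w hw)
    (brick_inBrick _ _ s hs) (Slab.corner_mem_cells _) (hws ▸ Slab.corner_mem_cells _)
  subst hβ'
  obtain rfl : w = s := Slab.shift_injective (Slab.cells_injective hws)
  exact hw' (by rwa [Bool.eq_not.mpr hβ.symm] at hs)

end Bricks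

theorem injective_decide_val_lt {m N : ℕ} (h : m ≤ N) :
    Function.Injective fun (i : Fin (m + 1)) (k : Fin N) => decide ((k : ℕ) < i) := by
  intro i j hij
  by_contra hne
  have := congrFun hij ⟨min i j, by omega⟩
  simp only [decide_eq_decide] at this
  omega

theorem box_6n6n8n_many_components_general (n : ℕ) :
    ∃ f : Fin (2 * n ^ 2 + 1) → Set (Set (ℤ × ℤ × ℤ)),
      (∀ i, IsSlabTiling (Box (6 * (n : ℤ)) (6 * (n : ℤ)) (8 * (n : ℤ))) (f i)) ∧
      (∀ i j, i ≠ j → ¬ Relation.ReflTransGen Flip (f i) (f j)) := by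
  let e := Fintype.equivFin (BrickIndex n)
  have hcard : 2 * n ^ 2 ≤ Fintype.card (BrickIndex n) := by
    simp only [Fintype.card_prod, Fintype.card_fin]
    rcases n.eq_zero_or_pos with rfl | hn
    · simp
    · nlinarith
  let v (i : Fin (2 * n ^ 2 + 1)) (β : BrickIndex n) : Bool := decide ((e β : ℕ) < i)
  have hv : Function.Injective v :=
    e.surjective.injective_comp_right.comp (injective_decide_val_lt hcard)
  refine ⟨fun i => tiling (v i), fun i => isSlabTiling_tiling _, fun i j hij h => hij ?_⟩
  exact hv (tiling_injective ((isRigid_tiling _).eq_of_reflTransGen h))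

theorem box_6n6n8n_many_components (n : ℕ) (hn : 0 < n) :
    ∃ f : Fin (2 * n ^ 2 + 1) → Set (Set (ℤ × ℤ × ℤ)),
      (∀ i, IsSlabTiling (Box (6 * (n : ℤ)) (6 * (n : ℤ)) (8 * (n : ℤ))) (f i)) ∧
      (∀ i j, i ≠ j → ¬ Relation.ReflTransGen Flip (f i) (f j)) :=
  box_6n6n8n_many_components_general n
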